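/- arXiv:math/0610519 — 2 statements merged into one kernel-verified Lean document; each statement's English description precedes it below -/
import Mathlib

section
/- Let a > -1 and b > -1/2. Then lim_{ε ↓ √(1+a)} (ε² - a - 1)^{b+1/2} ∫_{e^e}^∞ ((log x)^a (log log x)^{b-1/2} / x) · exp(-ε² log log x) dx = Γ(b + 1/2). -/
open Real Filter MeasureTheory Set

lemma aux_integrableOn_Ioi0 {s c : ℝ} (hs : -1 < s) (hc : 0 < c) :
    IntegrableOn (fun t : ℝ => t ^ s * Real.exp (-(c * t))) (Set.Ioi 0) := by
  have h := integrableOn_rpow_mul_exp_neg_mul_rpow hs zero_lt_one hc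
  refine h.congr_fun (fun t ht => ?_) measurableSet_Ioi
  simp only [Real.rpow_one]
  ring_nf

lemma aux_image : (fun t : ℝ => Real.exp (Real.exp t)) '' Set.Ioi 1
    = Set.Ioi (Real.exp (Real.exp 1)) := by
  ext x
  constructor
  · rintro ⟨t, ht, rfl⟩
    exact Real.exp_lt_exp.2 (Real.exp_lt_exp.2 ht)
  · intro hx
    have hx0 : (0:ℝ) < x := lt_trans (Real.exp_pos _) hx
    have hlog : Real.exp 1 < Real.log x := by
      have := Real.log_lt_log (Real.exp_pos _) hx
      rwa [Real.log_exp] at this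
    have hlogpos : (0:ℝ) < Real.log x := lt_trans (Real.exp_pos 1) hlog
    have hloglog : 1 < Real.log (Real.log x) := by
      have := Real.log_lt_log (Real.exp_pos _) hlog
      rwa [Real.log_exp] at this
    exact ⟨Real.log (Real.log x), hloglog, by
      show Real.exp (Real.exp (Real.log (Real.log x))) = x
      rw [Real.exp_log hlogpos, Real.exp_log hx0]⟩

lemma aux_change (a b ε : ℝ) :
    (∫ x in Set.Ici (Real.exp (Real.exp 1)),
        (Real.log x) ^ a * (Real.log (Real.log x)) ^ (b - 1/2) / x *
          Real.exp (-ε ^ 2 * Real.log (Real.log x)))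
    = ∫ t in Set.Ioi 1, t ^ (b - 1/2) * Real.exp (-((ε ^ 2 - a - 1) * t)) := by
  rw [MeasureTheory.integral_Ici_eq_integral_Ioi, ← aux_image]
  rw [integral_image_eq_integral_abs_deriv_smul (f := fun t => Real.exp (Real.exp t))
      (f' := fun t => Real.exp (Real.exp t) * Real.exp t)
      measurableSet_Ioi
      (fun t _ => (((Real.hasDerivAt_exp (Real.exp t)).comp t
        (Real.hasDerivAt_exp t)).hasDerivWithinAt))
      ((Real.exp_injective.comp Real.exp_injective).injOn)]
  apply setIntegral_congr_fun measurableSet_Ioi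
  intro t ht
  have hpos : (0:ℝ) < Real.exp (Real.exp t) * Real.exp t := by positivity
  simp only [smul_eq_mul]
  rw [ abs_of_pos hpos, Real.log_exp, Real.log_exp,
    Real.rpow_def_of_pos (Real.exp_pos t), Real.log_exp]
  have hne : Real.exp (Real.exp t) ≠ 0 := (Real.exp_pos _).ne'
  have hexp : Real.exp (-((ε ^ 2 - a - 1) * t))
      = Real.exp (t * a) * Real.exp (-ε ^ 2 * t) * Real.exp t := by
    rw [← Real.exp_add, ← Real.exp_add]; ring_nf
  rw [hexp]
  field_simp

lemma aux_split (b : ℝ) (hb : b > -1/2) {s : ℝ} (hs : 0 < s) :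
    s ^ (b + 1/2) * ∫ t in Set.Ioi 1, t ^ (b - 1/2) * Real.exp (-(s * t))
    = Real.Gamma (b + 1/2)
      - s ^ (b + 1/2) * ∫ t in Set.Ioc 0 1, t ^ (b - 1/2) * Real.exp (-(s * t)) := by
  have hbs : (-1:ℝ) < b - 1/2 := by linarith
  have hint : IntegrableOn (fun t : ℝ => t ^ (b - 1/2) * Real.exp (-(s * t))) (Set.Ioi 0) :=
    aux_integrableOn_Ioi0 hbs hs
  have hunion : Set.Ioc (0:ℝ) 1 ∪ Set.Ioi 1 = Set.Ioi 0 := Set.Ioc_union_Ioi_eq_Ioi zero_le_one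
  have hsplit : (∫ t in Set.Ioi (0:ℝ), t ^ (b - 1/2) * Real.exp (-(s * t)))
      = (∫ t in Set.Ioc (0:ℝ) 1, t ^ (b - 1/2) * Real.exp (-(s * t)))
        + ∫ t in Set.Ioi (1:ℝ), t ^ (b - 1/2) * Real.exp (-(s * t)) := by
    rw [← hunion]
    exact MeasureTheory.setIntegral_union (Set.Ioc_disjoint_Ioi le_rfl) measurableSet_Ioi
      (hint.mono_set (by rw [← hunion]; exact Set.subset_union_left))
      (hint.mono_set (by rw [← hunion]; exact Set.subset_union_right))
  have hgamma : (∫ t in Set.Ioi (0:ℝ), t ^ (b - 1/2) * Real.exp (-(s * t)))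
      = (1 / s) ^ (b + 1/2) * Real.Gamma (b + 1/2) := by
    have h := Real.integral_rpow_mul_exp_neg_mul_Ioi (a := b + 1/2) (r := s) (by linarith) hs
    rw [show b + 1/2 - 1 = b - 1/2 by ring] at h
    exact h
  have hpow : s ^ (b + 1/2) * (1 / s) ^ (b + 1/2) = 1 := by
    rw [show (1:ℝ)/s = s⁻¹ from one_div s, Real.inv_rpow hs.le, mul_inv_cancel₀ (Real.rpow_pos_of_pos hs _).ne']
  have h1 : (∫ t in Set.Ioi (1:ℝ), t ^ (b - 1/2) * Real.exp (-(s * t)))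
      = (1 / s) ^ (b + 1/2) * Real.Gamma (b + 1/2)
        - ∫ t in Set.Ioc (0:ℝ) 1, t ^ (b - 1/2) * Real.exp (-(s * t)) := by
    rw [← hgamma, hsplit]; ring
  rw [h1, mul_sub, ← mul_assoc, hpow, one_mul]

theorem limit_integral_log_rpow (a b : ℝ) (ha : a > -1) (hb : b > -1/2) :
    Tendsto (fun ε : ℝ =>
        (ε ^ 2 - a - 1) ^ (b + 1/2) *
          ∫ x in Set.Ici (Real.exp (Real.exp 1)),
            (Real.log x) ^ a * (Real.log (Real.log x)) ^ (b - 1/2) / x *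
              Real.exp (-ε ^ 2 * Real.log (Real.log x)))
      (nhdsWithin (Real.sqrt (1 + a)) (Set.Ioi (Real.sqrt (1 + a))))
      (nhds (Real.Gamma (b + 1/2))) := by
  have hb2 : (0:ℝ) < b + 1/2 := by linarith
  have hbs : (-1:ℝ) < b - 1/2 := by linarith
  set c := Real.sqrt (1 + a) with hcdef
  have hc2 : c ^ 2 = 1 + a := Real.sq_sqrt (by linarith)
  have hcnn : 0 ≤ c := Real.sqrt_nonneg _
  have hpos : ∀ ε : ℝ, c < ε → 0 < ε ^ 2 - a - 1 := by
    intro ε hε; nlinarith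
  -- the substitution map tends to 0 from the right
  have hs_tendsto : Tendsto (fun ε : ℝ => ε ^ 2 - a - 1)
      (nhdsWithin c (Set.Ioi c)) (nhdsWithin 0 (Set.Ioi 0)) := by
    rw [tendsto_nhdsWithin_iff]
    constructor
    · have hcont : Tendsto (fun ε : ℝ => ε ^ 2 - a - 1) (nhds c) (nhds (c ^ 2 - a - 1)) :=
        (((continuous_pow 2).sub continuous_const).sub continuous_const).tendsto c
      rw [hc2] at hcont
      have : (1 : ℝ) + a - a - 1 = 0 := by ring
      rw [this] at hcont
      exact hcont.mono_left nhdsWithin_le_nhds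
    · filter_upwards [self_mem_nhdsWithin] with ε hε
      exact hpos ε hε
  -- tail error tends to 0
  have hE : Tendsto (fun s : ℝ => s ^ (b + 1/2) *
      ∫ t in Set.Ioc (0:ℝ) 1, t ^ (b - 1/2) * Real.exp (-(s * t)))
      (nhdsWithin 0 (Set.Ioi 0)) (nhds 0) := by
    have hC_int : IntegrableOn (fun t : ℝ => t ^ (b - 1/2)) (Set.Ioc 0 1) := by
      have := intervalIntegral.intervalIntegrable_rpow' (a := (0:ℝ)) (b := 1) hbs
      rwa [intervalIntegrable_iff_integrableOn_Ioc_of_le zero_le_one] at this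
    set C := ∫ t in Set.Ioc (0:ℝ) 1, t ^ (b - 1/2) with hCdef
    apply squeeze_zero' (g := fun s : ℝ => s ^ (b + 1/2) * C)
    · filter_upwards [self_mem_nhdsWithin] with s hs
      have hs0 : (0:ℝ) < s := hs
      refine mul_nonneg (Real.rpow_nonneg hs0.le _) ?_
      refine setIntegral_nonneg measurableSet_Ioc fun t ht => ?_
      exact mul_nonneg (Real.rpow_nonneg ht.1.le _) (Real.exp_pos _).le
    · filter_upwards [self_mem_nhdsWithin] with s hs
      have hs0 : (0:ℝ) < s := hs
      refine mul_le_mul_of_nonneg_left ?_ (Real.rpow_nonneg hs0.le _)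
      refine setIntegral_mono_on
        ((aux_integrableOn_Ioi0 hbs hs0).mono_set Set.Ioc_subset_Ioi_self)
        hC_int measurableSet_Ioc fun t ht => ?_
      have h1 : Real.exp (-(s * t)) ≤ 1 := by
        rw [Real.exp_le_one_iff]
        nlinarith [ht.1, ht.2]
      calc t ^ (b - 1/2) * Real.exp (-(s * t)) ≤ t ^ (b - 1/2) * 1 :=
            mul_le_mul_of_nonneg_left h1 (Real.rpow_nonneg ht.1.le _)
        _ = t ^ (b - 1/2) := mul_one _
    · have h0 : Tendsto (fun s : ℝ => s ^ (b + 1/2)) (nhds 0) (nhds 0) := by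
        have hct := (Real.continuousAt_rpow_const 0 (b + 1/2) (Or.inr hb2.le)).tendsto
        rwa [Real.zero_rpow hb2.ne'] at hct
      have h1 : Tendsto (fun s : ℝ => s ^ (b + 1/2)) (nhdsWithin 0 (Set.Ioi 0)) (nhds 0) :=
        h0.mono_left nhdsWithin_le_nhds
      have h2 := h1.mul_const C
      simpa using h2
  -- combine
  have key : (fun ε : ℝ => Real.Gamma (b + 1/2) -
        (fun s : ℝ => s ^ (b + 1/2) *
          ∫ t in Set.Ioc (0:ℝ) 1, t ^ (b - 1/2) * Real.exp (-(s * t))) (ε ^ 2 - a - 1))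
      =ᶠ[nhdsWithin c (Set.Ioi c)]
      (fun ε : ℝ =>
        (ε ^ 2 - a - 1) ^ (b + 1/2) *
          ∫ x in Set.Ici (Real.exp (Real.exp 1)),
            (Real.log x) ^ a * (Real.log (Real.log x)) ^ (b - 1/2) / x *
              Real.exp (-ε ^ 2 * Real.log (Real.log x))) := by
    filter_upwards [self_mem_nhdsWithin] with ε hε
    have hsε : 0 < ε ^ 2 - a - 1 := hpos ε hε
    rw [aux_change a b ε]
    have := aux_split b hb hsε
    rw [this]
  have hfin : Tendsto (fun ε : ℝ => Real.Gamma (b + 1/2) -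
      (fun s : ℝ => s ^ (b + 1/2) *
        ∫ t in Set.Ioc (0:ℝ) 1, t ^ (b - 1/2) * Real.exp (-(s * t))) (ε ^ 2 - a - 1))
      (nhdsWithin c (Set.Ioi c)) (nhds (Real.Gamma (b + 1/2))) := by
    have := (tendsto_const_nhds (x := Real.Gamma (b + 1/2))
      (f := nhdsWithin c (Set.Ioi c))).sub (hE.comp hs_tendsto)
    simpa [Function.comp] using this
  exact hfin.congr' key
end

section
/- Let N be standard normal, τ ∈ ℝ, and suppose a_n(ε) is a real function of n and ε with a_n(ε) · log log n → τ as n → ∞ and ε ↓ √(1+a), where a > -1. Then for any θ > 0 there exist δ > 0 and n_0 such that for all n ≥ n_0 and ε ∈ (√(1+a), √(1+a)+δ): P(|N| ≥ √(2 log log n)(ε + a_n(ε))) ≤ (1/√(π(1+a))) (log log n)^{-1/2} exp(-ε² log log n) exp(-2τ√(1+a) + θ), and the corresponding lower bound with +θ replaced by -θ holds. -/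
open Real Filter Set MeasureTheory ProbabilityTheory

/-- `lg x = ln (max x e)`. -/
noncomputable def lg (x : ℝ) : ℝ := Real.log (max x (Real.exp 1))

/-- `llg x = lg (lg x)`. -/
noncomputable def llg (x : ℝ) : ℝ := lg (lg x)

/-- Two-sided tail `P(|N| ≥ x)` of a standard normal variable. -/
noncomputable def normalAbsTail (x : ℝ) : ℝ := (gaussianReal 0 1 {y : ℝ | x ≤ |y|}).toReal

open Topology

noncomputable def gTail (x : ℝ) : ℝ := ∫ t in Ioi x, Real.exp (-t^2/2)

lemma gauss_eq : (fun t : ℝ => Real.exp (-t^2/2)) = fun t => Real.exp (-(1/2:ℝ) * t^2) := by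
  funext t; congr 1; ring

lemma integrable_gauss : Integrable (fun t : ℝ => Real.exp (-t^2/2)) := by
  rw [gauss_eq]; exact integrable_exp_neg_mul_sq (by norm_num)

lemma hasDerivAt_gaussexp (t : ℝ) :
    HasDerivAt (fun t : ℝ => Real.exp (-t^2/2)) (-t * Real.exp (-t^2/2)) t := by
  have h : HasDerivAt (fun t : ℝ => -t^2/2) (-t) t := by
    have := ((hasDerivAt_pow 2 t).neg.div_const 2)
    refine this.congr_deriv ?_; push_cast; ring
  simpa [mul_comm] using h.exp

lemma integral_t_exp (x : ℝ) :
    ∫ t in Ioi x, t * Real.exp (-t^2/2) = Real.exp (-x^2/2) := by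
  have hderiv : ∀ t ∈ Ici x, HasDerivAt (fun t : ℝ => -Real.exp (-t^2/2))
      (t * Real.exp (-t^2/2)) t := by
    intro t _
    have := (hasDerivAt_gaussexp t).neg
    simp only [neg_mul, neg_neg] at this
    exact this
  have hint : IntegrableOn (fun t : ℝ => t * Real.exp (-t^2/2)) (Ioi x) := by
    have : Integrable (fun t : ℝ => t * Real.exp (-t^2/2)) := by
      have := integrable_mul_exp_neg_mul_sq (b := (1/2:ℝ)) (by norm_num)
      refine this.congr ?_
      filter_upwards with t; congr 1; congr 1; ring
    exact this.integrableOn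
  have htend : Tendsto (fun t : ℝ => -Real.exp (-t^2/2)) atTop (𝓝 0) := by
    have h1 : Tendsto (fun t : ℝ => -t^2/2) atTop atBot := by
      have h2 : Tendsto (fun t : ℝ => -t^2) atTop atBot :=
        tendsto_neg_atTop_atBot.comp (tendsto_pow_atTop two_ne_zero)
      exact h2.atBot_div_const two_pos
    simpa using (Real.tendsto_exp_atBot.comp h1).neg
  have := integral_Ioi_of_hasDerivAt_of_tendsto' hderiv hint htend
  rw [this]; ring

lemma gTail_le {x : ℝ} (hx : 0 < x) : gTail x ≤ Real.exp (-x^2/2) / x := by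
  have h1 : gTail x ≤ ∫ t in Ioi x, (t * Real.exp (-t^2/2)) * x⁻¹ := by
    refine setIntegral_mono_on integrable_gauss.integrableOn ?_ measurableSet_Ioi ?_
    · have : Integrable (fun t : ℝ => t * Real.exp (-t^2/2)) := by
        have := integrable_mul_exp_neg_mul_sq (b := (1/2:ℝ)) (by norm_num)
        refine this.congr ?_
        filter_upwards with t; congr 1; congr 1; ring
      exact (this.mul_const _).integrableOn
    · intro t ht
      rw [mem_Ioi] at ht
      have htpos : 0 < t := hx.trans ht
      rw [mul_comm (t * _), ← mul_assoc]
      nth_rw 1 [← one_mul (Real.exp (-t^2/2))]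
      gcongr
      rw [inv_mul_eq_div, le_div_iff₀ hx]
      linarith
  calc gTail x ≤ _ := h1
    _ = Real.exp (-x^2/2) / x := by
        rw [integral_mul_const, integral_t_exp, ← div_eq_mul_inv]

lemma gTail_ge {x : ℝ} (hx : 2 ≤ x) :
    (1 - (x⁻¹)^2) * Real.exp (-x^2/2) / x ≤ gTail x := by
  have hx0 : 0 < x := by linarith
  set g : ℝ → ℝ := fun t => (t⁻¹ - (t⁻¹)^3) * Real.exp (-t^2/2) with hg
  have hderiv : ∀ t ∈ Ici x, HasDerivAt g ((3 * (t⁻¹)^4 - 1) * Real.exp (-t^2/2)) t := by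
    intro t ht
    have ht0 : t ≠ 0 := by rw [mem_Ici] at ht; nlinarith
    have h3 := (hasDerivAt_inv ht0).pow 3
    have h1 := (hasDerivAt_inv ht0).sub h3
    have h2 := h1.mul (hasDerivAt_gaussexp t)
    refine h2.congr_deriv ?_
    simp only [Pi.sub_apply, Pi.pow_apply]
    field_simp
    push_cast
    field_simp
    ring
  have hint : IntegrableOn (fun t => (3 * (t⁻¹)^4 - 1) * Real.exp (-t^2/2)) (Ioi x) := by
    refine Integrable.mono (integrable_gauss.integrableOn) ?_ ?_
    · refine (Measurable.aestronglyMeasurable ?_).restrict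
      fun_prop
    · rw [ae_restrict_iff' measurableSet_Ioi]
      refine ae_of_all _ fun t ht => ?_
      rw [mem_Ioi] at ht
      have h2t : 2 ≤ t := hx.trans ht.le
      have h1 : 0 < t := by linarith
      have hti : t⁻¹ ≤ (2:ℝ)⁻¹ := inv_anti₀ (by norm_num) h2t
      have h4 : (t⁻¹)^4 ≤ ((2:ℝ)⁻¹)^4 := pow_le_pow_left₀ (by positivity) hti 4
      rw [Real.norm_eq_abs, Real.norm_eq_abs, abs_mul, abs_of_pos (Real.exp_pos _)]
      nth_rw 2 [← one_mul (Real.exp (-t^2/2))]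
      gcongr
      rw [abs_le]
      constructor
      · have : 0 ≤ 3 * (t⁻¹)^4 := by positivity
        linarith
      · norm_num at h4 ⊢; nlinarith [h4]
  have htend : Tendsto g atTop (𝓝 0) := by
    have h1 := (tendsto_inv_atTop_zero (𝕜 := ℝ)).sub ((tendsto_inv_atTop_zero (𝕜 := ℝ)).pow 3)
    have h2 : Tendsto (fun t : ℝ => Real.exp (-t^2/2)) atTop (𝓝 0) := by
      have h4 : Tendsto (fun t : ℝ => -t^2) atTop atBot :=
        tendsto_neg_atTop_atBot.comp (tendsto_pow_atTop two_ne_zero)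
      have h3 : Tendsto (fun t : ℝ => -t^2/2) atTop atBot := h4.atBot_div_const two_pos
      exact Real.tendsto_exp_atBot.comp h3
    have h0 := h1.mul h2
    rw [show (0:ℝ) - 0^3 = 0 by norm_num, zero_mul] at h0
    refine h0.congr fun t => ?_
    simp [hg, inv_pow]
  have key := integral_Ioi_of_hasDerivAt_of_tendsto' hderiv hint htend
  have h5 : ∫ t in Ioi x, (1 - 3 * (t⁻¹)^4) * Real.exp (-t^2/2) = g x := by
    have : (fun t : ℝ => (1 - 3 * (t⁻¹)^4) * Real.exp (-t^2/2))
        = fun t => -((3 * (t⁻¹)^4 - 1) * Real.exp (-t^2/2)) := by funext t; ring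
    rw [this, integral_neg, key]; ring
  have h6 : ∫ t in Ioi x, (1 - 3 * (t⁻¹)^4) * Real.exp (-t^2/2) ≤ gTail x := by
    refine setIntegral_mono_on (hint.neg.congr ?_) integrable_gauss.integrableOn
      measurableSet_Ioi ?_
    · refine ae_of_all _ fun t => by simp; ring
    · intro t ht
      nth_rw 2 [← one_mul (Real.exp (-t^2/2))]
      gcongr
      have : 0 ≤ 3 * (t⁻¹)^4 := by positivity
      linarith
  rw [h5] at h6
  refine le_trans (le_of_eq ?_) h6
  rw [hg]
  field_simp

lemma gaussianPDFReal_zero_one (t : ℝ) :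
    gaussianPDFReal 0 1 t = (Real.sqrt (2 * π))⁻¹ * Real.exp (-t^2/2) := by
  simp [gaussianPDFReal]

lemma normalAbsTail_eq {x : ℝ} (hx : 0 < x) :
    normalAbsTail x = 2 * (Real.sqrt (2 * π))⁻¹ * gTail x := by
  have hset : {y : ℝ | x ≤ |y|} = Iic (-x) ∪ Ici x := by
    ext y
    simp only [mem_setOf_eq, mem_union, mem_Iic, mem_Ici, le_abs]
    constructor
    · rintro (h | h)
      · right; exact h
      · left; linarith
    · rintro (h | h)
      · right; linarith
      · left; exact h
  rw [normalAbsTail, hset, gaussianReal_apply_eq_integral 0 one_ne_zero,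
    ENNReal.toReal_ofReal]
  swap
  · exact setIntegral_nonneg (measurableSet_Iic.union measurableSet_Ici)
      fun y _ => gaussianPDFReal_nonneg 0 1 y
  rw [setIntegral_union (by
      rw [Set.disjoint_iff_inter_eq_empty, Iic_inter_Ici]
      exact Icc_eq_empty (by linarith)) measurableSet_Ici
    (integrable_gaussianPDFReal 0 1).integrableOn
    (integrable_gaussianPDFReal 0 1).integrableOn]
  have h1 : ∫ y in Iic (-x), gaussianPDFReal 0 1 y = ∫ y in Ioi x, gaussianPDFReal 0 1 y := by
    rw [← integral_comp_neg_Ioi]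
    congr 1
    funext y
    rw [gaussianPDFReal_zero_one, gaussianPDFReal_zero_one, neg_pow, neg_one_pow_eq_one_iff_even
      (by norm_num) |>.2 (by norm_num), one_mul]
  rw [h1, integral_Ici_eq_integral_Ioi]
  have h2 : ∫ y in Ioi x, gaussianPDFReal 0 1 y = (Real.sqrt (2 * π))⁻¹ * gTail x := by
    simp_rw [gaussianPDFReal_zero_one]
    rw [integral_const_mul, gTail]
  rw [h2]; ring

lemma one_le_lg (x : ℝ) : 1 ≤ lg x := by
  rw [lg]
  have h := Real.log_le_log (Real.exp_pos 1) (le_max_right x (Real.exp 1))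
  rwa [Real.log_exp] at h

lemma one_le_llg (x : ℝ) : 1 ≤ llg x := one_le_lg _

lemma tendsto_lg : Tendsto lg atTop atTop :=
  Real.tendsto_log_atTop.comp (tendsto_atTop_mono (fun x => le_max_left _ _) tendsto_id)

lemma tendsto_llg_nat : Tendsto (fun n : ℕ => llg n) atTop atTop :=
  (tendsto_lg.comp tendsto_lg).comp tendsto_natCast_atTop_atTop

lemma tendsto_sqrt_atTop : Tendsto Real.sqrt atTop atTop := by
  have h : Tendsto (fun y : ℝ => y ^ (1/2:ℝ)) atTop atTop := tendsto_rpow_atTop (by norm_num)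
  refine h.congr fun y => (Real.sqrt_eq_rpow y).symm ▸ rfl

lemma rpow_neg_half {L : ℝ} (hL : 0 < L) : L ^ (-(1:ℝ)/2) = (Real.sqrt L)⁻¹ := by
  rw [show (-(1:ℝ)/2) = -(1/2) by ring, Real.rpow_neg hL.le, Real.sqrt_eq_rpow]

theorem normal_tail_uniform_bounds (a τ : ℝ) (ha : a > -1) (c : ℕ → ℝ → ℝ)
    (hc : Tendsto (fun p : ℕ × ℝ => c p.1 p.2 * llg p.1)
      (atTop ×ˢ nhdsWithin (Real.sqrt (1 + a)) (Set.Ioi (Real.sqrt (1 + a)))) (nhds τ)) :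
    ∀ θ > (0:ℝ), ∃ δ > (0:ℝ), ∃ n₀ : ℕ, ∀ n ≥ n₀,
      ∀ ε ∈ Set.Ioo (Real.sqrt (1 + a)) (Real.sqrt (1 + a) + δ),
        normalAbsTail (Real.sqrt (2 * llg n) * (ε + c n ε)) ≤
          1 / Real.sqrt (Real.pi * (1 + a)) * (llg n) ^ (-(1:ℝ)/2) *
            Real.exp (-ε ^ 2 * llg n) * Real.exp (-2 * τ * Real.sqrt (1 + a) + θ) ∧
        1 / Real.sqrt (Real.pi * (1 + a)) * (llg n) ^ (-(1:ℝ)/2) *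
            Real.exp (-ε ^ 2 * llg n) * Real.exp (-2 * τ * Real.sqrt (1 + a) - θ) ≤
          normalAbsTail (Real.sqrt (2 * llg n) * (ε + c n ε)) := by
  intro θ hθ
  have h1a : (0:ℝ) < 1 + a := by linarith
  set s : ℝ := Real.sqrt (1 + a) with hs_def
  have hs_pos : 0 < s := Real.sqrt_pos.2 h1a
  have hs_sq : s ^ 2 = 1 + a := Real.sq_sqrt h1a.le
  set F : Filter (ℕ × ℝ) := atTop ×ˢ nhdsWithin s (Set.Ioi s) with hF
  -- basic limits
  have hL : Tendsto (fun p : ℕ × ℝ => llg p.1) F atTop := tendsto_llg_nat.comp tendsto_fst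
  have hε : Tendsto (fun p : ℕ × ℝ => p.2) F (𝓝 s) := tendsto_snd.mono_right nhdsWithin_le_nhds
  have hcc : Tendsto (fun p : ℕ × ℝ => c p.1 p.2) F (𝓝 0) := by
    have h1 : Tendsto (fun p : ℕ × ℝ => (c p.1 p.2 * llg p.1) * (llg p.1)⁻¹) F (𝓝 (τ * 0)) :=
      hc.mul hL.inv_tendsto_atTop
    rw [mul_zero] at h1
    refine h1.congr fun p => ?_
    have hL1 : (1:ℝ) ≤ llg p.1 := one_le_llg _
    have : llg (p.1:ℝ) ≠ 0 := by linarith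
    rw [mul_assoc, mul_inv_cancel₀ this, mul_one]
  have hεc : Tendsto (fun p : ℕ × ℝ => p.2 + c p.1 p.2) F (𝓝 s) := by
    simpa using hε.add hcc
  -- the correction exponent
  set E : ℕ × ℝ → ℝ := fun p =>
    2 * p.2 * (c p.1 p.2 * llg p.1) + (c p.1 p.2 * llg p.1)^2 / (llg p.1) with hE
  have hEt : Tendsto E F (𝓝 (2 * s * τ)) := by
    have h1 : Tendsto (fun p : ℕ × ℝ => 2 * p.2 * (c p.1 p.2 * llg p.1)) F (𝓝 (2 * s * τ)) :=
      ((tendsto_const_nhds (x := (2:ℝ))).mul hε).mul hc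
    have h2 : Tendsto (fun p : ℕ × ℝ => (c p.1 p.2 * llg p.1)^2 * (llg p.1)⁻¹) F
        (𝓝 (τ^2 * 0)) := (hc.pow 2).mul hL.inv_tendsto_atTop
    rw [mul_zero] at h2
    have h3 := h1.add h2
    rw [add_zero] at h3
    refine h3.congr fun p => ?_
    simp only [hE, div_eq_mul_inv]
  -- X → ∞
  have hXt : Tendsto (fun p : ℕ × ℝ => Real.sqrt (2 * llg p.1) * (p.2 + c p.1 p.2)) F atTop := by
    have h1 : Tendsto (fun p : ℕ × ℝ => Real.sqrt (2 * llg p.1)) F atTop := by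
      refine _root_.tendsto_sqrt_atTop.comp ?_
      exact (tendsto_id.const_mul_atTop two_pos).comp hL
    exact h1.atTop_mul_pos hs_pos hεc
  -- eventual facts
  have ev1 : ∀ᶠ p : ℕ × ℝ in F, p.2 ∈ Set.Ioi s := tendsto_snd.eventually eventually_mem_nhdsWithin
  have ev2 : ∀ᶠ p : ℕ × ℝ in F, 2 ≤ Real.sqrt (2 * llg p.1) * (p.2 + c p.1 p.2) :=
    hXt.eventually_ge_atTop 2
  have ev3 : ∀ᶠ p : ℕ × ℝ in F, 0 < p.2 + c p.1 p.2 := hεc.eventually (eventually_gt_nhds hs_pos)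
  have hexpE : Tendsto (fun p : ℕ × ℝ => Real.exp (-(E p))) F (𝓝 (Real.exp (-(2*s*τ)))) :=
    (Real.continuous_exp.tendsto _).comp hEt.neg
  have ev4 : ∀ᶠ p : ℕ × ℝ in F,
      s * Real.exp (-(E p)) < (p.2 + c p.1 p.2) * Real.exp (-2*τ*s + θ) := by
    have hA : Tendsto (fun p : ℕ × ℝ => s * Real.exp (-(E p))) F
        (𝓝 (s * Real.exp (-(2*s*τ)))) := tendsto_const_nhds.mul hexpE
    have hB : Tendsto (fun p : ℕ × ℝ => (p.2 + c p.1 p.2) * Real.exp (-2*τ*s + θ)) F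
        (𝓝 (s * Real.exp (-2*τ*s + θ))) := hεc.mul tendsto_const_nhds
    refine hA.eventually_lt hB ?_
    have : Real.exp (-(2*s*τ)) < Real.exp (-2*τ*s + θ) := by
      apply Real.exp_lt_exp.2; nlinarith
    exact mul_lt_mul_of_pos_left this hs_pos
  have ev5 : ∀ᶠ p : ℕ × ℝ in F,
      (p.2 + c p.1 p.2) * Real.exp (-2*τ*s - θ) <
        s * (1 - ((Real.sqrt (2 * llg p.1) * (p.2 + c p.1 p.2))⁻¹)^2) * Real.exp (-(E p)) := by
    have hA : Tendsto (fun p : ℕ × ℝ => (p.2 + c p.1 p.2) * Real.exp (-2*τ*s - θ)) F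
        (𝓝 (s * Real.exp (-2*τ*s - θ))) := hεc.mul tendsto_const_nhds
    have hB : Tendsto (fun p : ℕ × ℝ =>
        s * (1 - ((Real.sqrt (2 * llg p.1) * (p.2 + c p.1 p.2))⁻¹)^2) * Real.exp (-(E p))) F
        (𝓝 (s * (1 - 0^2) * Real.exp (-(2*s*τ)))) :=
      (tendsto_const_nhds.mul (tendsto_const_nhds.sub (hXt.inv_tendsto_atTop.pow 2))).mul hexpE
    refine hA.eventually_lt hB ?_
    have h0 : Real.exp (-2*τ*s - θ) < Real.exp (-(2*s*τ)) := by
      apply Real.exp_lt_exp.2; nlinarith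
    calc s * Real.exp (-2*τ*s - θ) < s * Real.exp (-(2*s*τ)) :=
          mul_lt_mul_of_pos_left h0 hs_pos
      _ = s * (1 - 0^2) * Real.exp (-(2*s*τ)) := by ring
  -- the key eventual statement
  have key : ∀ᶠ p : ℕ × ℝ in F,
      (normalAbsTail (Real.sqrt (2 * llg p.1) * (p.2 + c p.1 p.2)) ≤
        1 / Real.sqrt (Real.pi * (1 + a)) * (llg p.1) ^ (-(1:ℝ)/2) *
          Real.exp (-p.2 ^ 2 * llg p.1) * Real.exp (-2 * τ * s + θ)) ∧
      (1 / Real.sqrt (Real.pi * (1 + a)) * (llg p.1) ^ (-(1:ℝ)/2) *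
          Real.exp (-p.2 ^ 2 * llg p.1) * Real.exp (-2 * τ * s - θ) ≤
        normalAbsTail (Real.sqrt (2 * llg p.1) * (p.2 + c p.1 p.2))) := by
    filter_upwards [ev2, ev3, ev4, ev5] with p h2 h3 h4 h5
    set L : ℝ := llg p.1 with hLdef
    set cc : ℝ := c p.1 p.2 with hccdef
    set x : ℝ := Real.sqrt (2 * L) * (p.2 + cc) with hxdef
    have hL1 : (1:ℝ) ≤ L := one_le_llg _
    have hLpos : (0:ℝ) < L := by linarith
    have hx0 : (0:ℝ) < x := by linarith
    have hx2sq : x ^ 2 = 2 * L * (p.2 + cc)^2 := by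
      rw [hxdef, mul_pow, Real.sq_sqrt (by positivity)]
    have hEE : Real.exp (-x^2/2) = Real.exp (-p.2^2 * L) * Real.exp (-(E p)) := by
      rw [← Real.exp_add]
      congr 1
      rw [hx2sq, hE]
      have : L ≠ 0 := by linarith
      field_simp
      ring
    -- abbreviations for the algebra
    have h2L : Real.sqrt (2 * L) = Real.sqrt 2 * Real.sqrt L := Real.sqrt_mul (by norm_num) L
    have h2π : Real.sqrt (2 * π) = Real.sqrt 2 * Real.sqrt π := Real.sqrt_mul (by norm_num) π
    have hπa : Real.sqrt (π * (1 + a)) = Real.sqrt π * s := Real.sqrt_mul Real.pi_pos.le _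
    have h22 : Real.sqrt 2 * Real.sqrt 2 = 2 := Real.mul_self_sqrt (by norm_num)
    have hrL : L ^ (-(1:ℝ)/2) = (Real.sqrt L)⁻¹ := rpow_neg_half hLpos
    have hu : (0:ℝ) < Real.sqrt L := Real.sqrt_pos.2 hLpos
    have hv : (0:ℝ) < Real.sqrt π := Real.sqrt_pos.2 Real.pi_pos
    have hw : (0:ℝ) < Real.sqrt 2 := Real.sqrt_pos.2 (by norm_num)
    set D : ℝ := (Real.sqrt π * Real.sqrt L)⁻¹ * Real.exp (-p.2^2 * L) / ((p.2 + cc) * s)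
      with hDdef
    have hD : 0 ≤ D := by positivity
    have hK : (0:ℝ) ≤ 2 * (Real.sqrt (2 * π))⁻¹ := by positivity
    have e1 : 2 * (Real.sqrt (2 * π))⁻¹ * (Real.exp (-x^2/2) / x) =
        (s * Real.exp (-(E p))) * D := by
      rw [hEE, hDdef, hxdef, h2L, h2π]
      have hεc0 : p.2 + cc ≠ 0 := ne_of_gt h3
      field_simp
      ring_nf
      rw [show Real.sqrt 2 ^ 2 = Real.sqrt 2 * Real.sqrt 2 by ring, h22] <;> try ring
    have e3 : 2 * (Real.sqrt (2 * π))⁻¹ * ((1 - (x⁻¹)^2) * Real.exp (-x^2/2) / x) =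
        (s * (1 - (x⁻¹)^2) * Real.exp (-(E p))) * D := by
      rw [hEE, hDdef]
      nth_rw 2 [hxdef]
      rw [h2L, h2π]
      have hεc0 : p.2 + cc ≠ 0 := ne_of_gt h3
      field_simp
      ring_nf
      rw [show Real.sqrt 2 ^ 2 = Real.sqrt 2 * Real.sqrt 2 by ring, h22]
      ring
    have e2 : ∀ w : ℝ, 1 / Real.sqrt (π * (1 + a)) * L ^ (-(1:ℝ)/2) *
        Real.exp (-p.2 ^ 2 * L) * Real.exp w = ((p.2 + cc) * Real.exp w) * D := by
      intro w
      rw [hπa, hrL, hDdef]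
      have hεc0 : p.2 + cc ≠ 0 := ne_of_gt h3
      field_simp
    rw [normalAbsTail_eq hx0]
    constructor
    · calc 2 * (Real.sqrt (2 * π))⁻¹ * gTail x
          ≤ 2 * (Real.sqrt (2 * π))⁻¹ * (Real.exp (-x^2/2) / x) :=
            mul_le_mul_of_nonneg_left (gTail_le hx0) hK
        _ = (s * Real.exp (-(E p))) * D := e1
        _ ≤ ((p.2 + cc) * Real.exp (-2*τ*s + θ)) * D :=
            mul_le_mul_of_nonneg_right h4.le hD
        _ = _ := (e2 _).symm
    · calc 1 / Real.sqrt (π * (1 + a)) * L ^ (-(1:ℝ)/2) *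
            Real.exp (-p.2 ^ 2 * L) * Real.exp (-2 * τ * s - θ)
          = ((p.2 + cc) * Real.exp (-2*τ*s - θ)) * D := e2 _
        _ ≤ (s * (1 - (x⁻¹)^2) * Real.exp (-(E p))) * D :=
            mul_le_mul_of_nonneg_right h5.le hD
        _ = 2 * (Real.sqrt (2 * π))⁻¹ * ((1 - (x⁻¹)^2) * Real.exp (-x^2/2) / x) := e3.symm
        _ ≤ 2 * (Real.sqrt (2 * π))⁻¹ * gTail x :=
            mul_le_mul_of_nonneg_left (gTail_ge h2) hK
  -- extraction
  rw [hF, eventually_prod_iff] at key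
  obtain ⟨pa, hpa, pb, hpb, hkey⟩ := key
  rw [eventually_atTop] at hpa
  obtain ⟨n₀, hn₀⟩ := hpa
  obtain ⟨u, hu, hub⟩ := mem_nhdsGT_iff_exists_Ioo_subset.1 hpb
  have hus : s < u := hu
  refine ⟨u - s, by linarith, n₀, fun n hn ε hε => ?_⟩
  have hε' : ε ∈ Set.Ioo s u := by
    rcases hε with ⟨hε1, hε2⟩
    exact ⟨hε1, by linarith⟩
  exact hkey (hn₀ n hn) (hub hε')
end
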